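/- arXiv:2204.04158 — 2 statements merged into one kernel-verified Lean document; each statement's English description precedes it below -/
import Mathlib

section
/- Let K be a valued field, let F be a function on K^{ℓ-1} × K with values in K, and let λ be as given. Suppose (x₁,y₁), (x₂,y₂), (x₃,y₃) ∈ K^{ℓ-1} × K satisfy |(x₁,y₁) - (x₃,y₃)| ≤ |(x₁,y₁) - (x₂,y₂)|, suppose rv_λ^{(ℓ)}(grad F) is constant on these three points, and suppose the inequality |F(a) - F(b) - grad F(b)·(a - b)| < λ·|grad F(b)|·|a - b| holds for the pairs (a,b) = ((x₁,y₁),(x₃,y₃)) and (a,b) = ((x₃,y₃),(x₂,y₂)). Then the inequality also holds for (a,b) = ((x₁,y₁),(x₂,y₂)). -/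
/-- `0` is a bottom element in a linearly ordered commutative group with zero. -/
local instance orderBotOfLinearOrderedCommGroupWithZero
    {Γ : Type*} [LinearOrderedCommGroupWithZero Γ] : OrderBot Γ where
  bot := 0
  bot_le _ := zero_le'

/-- The maximum norm on `K^ι` induced by a valuation. -/
def vsup {K Γ : Type*} [Field K] [LinearOrderedCommGroupWithZero Γ]
    (v : Valuation K Γ) {ι : Type*} [Fintype ι] (x : ι → K) : Γ :=
  Finset.univ.sup fun i => v (x i)

section aux

variable {K Γ : Type*} [Field K] [LinearOrderedCommGroupWithZero Γ]
    (v : Valuation K Γ) {ι : Type*} [Fintype ι]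

lemma v_apply_le_vsup (x : ι → K) (i : ι) : v (x i) ≤ vsup v x :=
  Finset.le_sup (f := fun j => v (x j)) (Finset.mem_univ i)

lemma vsup_add_le (x y : ι → K) : vsup v (x + y) ≤ max (vsup v x) (vsup v y) := by
  refine Finset.sup_le fun i _ => ?_
  calc v ((x + y) i) = v (x i + y i) := by simp
    _ ≤ max (v (x i)) (v (y i)) := v.map_add _ _
    _ ≤ max (vsup v x) (vsup v y) :=
        max_le_max (v_apply_le_vsup v x i) (v_apply_le_vsup v y i)

lemma vsup_neg (x : ι → K) : vsup v (-x) = vsup v x := by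
  unfold vsup
  refine Finset.sup_congr rfl fun i _ => ?_
  simp [Valuation.map_neg]

lemma vsup_sub_swap (x y : ι → K) : vsup v (x - y) = vsup v (y - x) := by
  rw [← vsup_neg v (x - y), neg_sub]

lemma v_sum_mul_le (g x : ι → K) :
    v (∑ i, g i * x i) ≤ vsup v g * vsup v x := by
  refine v.map_sum_le fun i _ => ?_
  rw [v.map_mul]
  exact mul_le_mul' (v_apply_le_vsup v g i) (v_apply_le_vsup v x i)

lemma vsup_add_eq_of_lt {x y : ι → K} (h : vsup v y < vsup v x) :
    vsup v (x + y) = vsup v x := by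
  refine le_antisymm ((vsup_add_le v x y).trans (max_le le_rfl h.le)) ?_
  by_contra hc
  push_neg at hc
  have hx : vsup v x ≤ max (vsup v (x + y)) (vsup v y) := by
    have := vsup_add_le v (x + y) (-y)
    simpa [vsup_neg] using this
  rcases max_cases (vsup v (x + y)) (vsup v y) with ⟨he, _⟩ | ⟨he, _⟩ <;>
    rw [he] at hx
  · exact absurd (lt_of_le_of_lt hx hc) (lt_irrefl _)
  · exact absurd (lt_of_le_of_lt hx h) (lt_irrefl _)

end aux

/-- Jumping through an intermediate point for the λ-supremum-Jacobian inequality: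
if the inequality `|F a - F b - grad F b · (a - b)| < λ·|grad F b|·|a - b|` holds for the
pairs `(p₁, p₃)` and `(p₃, p₂)`, with `|p₁ - p₃| ≤ |p₁ - p₂|` and `rv_λ`-constant gradient
on the three points, then it also holds for the pair `(p₁, p₂)`. -/
theorem supJac_jump {K Γ : Type*} [Field K] [LinearOrderedCommGroupWithZero Γ]
    (v : Valuation K Γ) {n : ℕ} (F : (Fin n → K) → K) (gradF : (Fin n → K) → Fin n → K)
    (lam : Γ) (hlam0 : 0 < lam) (hlam1 : lam ≤ 1) (p₁ p₂ p₃ : Fin n → K)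
    (hdist : vsup v (p₁ - p₃) ≤ vsup v (p₁ - p₂))
    (hg12 : gradF p₁ = gradF p₂ ∨
      vsup v (gradF p₁ - gradF p₂) < lam * vsup v (gradF p₁))
    (hg13 : gradF p₁ = gradF p₃ ∨
      vsup v (gradF p₁ - gradF p₃) < lam * vsup v (gradF p₁))
    (hg23 : gradF p₂ = gradF p₃ ∨
      vsup v (gradF p₂ - gradF p₃) < lam * vsup v (gradF p₂))
    (h13 : v (F p₁ - F p₃ - ∑ i, gradF p₃ i * (p₁ i - p₃ i)) <
      lam * vsup v (gradF p₃) * vsup v (p₁ - p₃))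
    (h32 : v (F p₃ - F p₂ - ∑ i, gradF p₂ i * (p₃ i - p₂ i)) <
      lam * vsup v (gradF p₂) * vsup v (p₃ - p₂)) :
    v (F p₁ - F p₂ - ∑ i, gradF p₂ i * (p₁ i - p₂ i)) <
      lam * vsup v (gradF p₂) * vsup v (p₁ - p₂) := by
  set G := gradF
  -- positivity facts
  have h13ne : lam * vsup v (G p₃) * vsup v (p₁ - p₃) ≠ 0 :=
    fun h => absurd (h ▸ h13) (by simp)
  have h32ne : lam * vsup v (G p₂) * vsup v (p₃ - p₂) ≠ 0 :=
    fun h => absurd (h ▸ h32) (by simp)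
  have hg3ne : vsup v (G p₃) ≠ 0 := fun h => h13ne (by rw [h]; simp)
  have hd13ne : vsup v (p₁ - p₃) ≠ 0 := fun h => h13ne (by rw [h]; simp)
  have hg2ne : vsup v (G p₂) ≠ 0 := fun h => h32ne (by rw [h]; simp)
  have hd12ne : vsup v (p₁ - p₂) ≠ 0 := fun h => hd13ne (le_antisymm (h ▸ hdist) zero_le')
  -- vsup (G p₃) = vsup (G p₂)
  have hg32 : vsup v (G p₃) = vsup v (G p₂) := by
    rcases hg23 with h | h
    · rw [h]
    · have hlt : vsup v (-(G p₂ - G p₃)) < vsup v (G p₂) := by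
        rw [vsup_neg]
        exact lt_of_lt_of_le h (le_trans (mul_le_mul_left hlam1 _) (by simp))
      have := vsup_add_eq_of_lt v hlt
      simpa using this
  -- dist p₃ p₂ ≤ dist p₁ p₂
  have hd32 : vsup v (p₃ - p₂) ≤ vsup v (p₁ - p₂) := by
    have h1 : p₃ - p₂ = (p₃ - p₁) + (p₁ - p₂) := by abel
    calc vsup v (p₃ - p₂) ≤ max (vsup v (p₃ - p₁)) (vsup v (p₁ - p₂)) := by
          rw [h1]; exact vsup_add_le v _ _
      _ ≤ vsup v (p₁ - p₂) := by
          rw [vsup_sub_swap v p₃ p₁]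
          exact max_le hdist le_rfl
  set A := F p₁ - F p₃ - ∑ i, G p₃ i * (p₁ i - p₃ i) with hA
  set B := F p₃ - F p₂ - ∑ i, G p₂ i * (p₃ i - p₂ i) with hB
  set C := ∑ i, (G p₃ i - G p₂ i) * (p₁ i - p₃ i) with hC
  have key : F p₁ - F p₂ - ∑ i, G p₂ i * (p₁ i - p₂ i) = A + B + C := by
    rw [hA, hB, hC]
    have : ∑ i, G p₂ i * (p₁ i - p₂ i)
        = ∑ i, (G p₃ i * (p₁ i - p₃ i) + G p₂ i * (p₃ i - p₂ i)
            - (G p₃ i - G p₂ i) * (p₁ i - p₃ i)) := by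
      refine Finset.sum_congr rfl fun i _ => by ring
    rw [this, Finset.sum_sub_distrib, Finset.sum_add_distrib]
    ring
  rw [key]
  -- bound each piece
  have hbA : v A < lam * vsup v (G p₂) * vsup v (p₁ - p₂) := by
    calc v A < lam * vsup v (G p₃) * vsup v (p₁ - p₃) := h13
      _ ≤ lam * vsup v (G p₂) * vsup v (p₁ - p₂) := by
          rw [hg32]; exact mul_le_mul_right hdist _
  have hbB : v B < lam * vsup v (G p₂) * vsup v (p₁ - p₂) :=
    lt_of_lt_of_le h32 (mul_le_mul_right hd32 _)
  have hbC : v C < lam * vsup v (G p₂) * vsup v (p₁ - p₂) := by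
    rcases hg23 with h | h
    · have : C = 0 := by
        rw [hC]
        refine Finset.sum_eq_zero fun i _ => ?_
        rw [show G p₃ i - G p₂ i = 0 by rw [h]; ring]
        ring
      rw [this, v.map_zero, zero_lt_iff]
      exact mul_ne_zero (mul_ne_zero hlam0.ne' hg2ne) hd12ne
    · have hle : v C ≤ vsup v (G p₃ - G p₂) * vsup v (p₁ - p₃) := by
        rw [hC]
        have := v_sum_mul_le v (G p₃ - G p₂) (p₁ - p₃)
        simpa using this
      have hlt : vsup v (G p₃ - G p₂) < lam * vsup v (G p₂) := by
        rw [vsup_sub_swap]; exact h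
      calc v C ≤ vsup v (G p₃ - G p₂) * vsup v (p₁ - p₃) := hle
        _ = vsup v (p₁ - p₃) * vsup v (G p₃ - G p₂) := mul_comm _ _
        _ < vsup v (p₁ - p₂) * (lam * vsup v (G p₂)) :=
            mul_lt_mul_of_le_of_lt_of_nonneg_of_pos hdist hlt zero_le'
              (zero_lt_iff.mpr hd12ne)
        _ = lam * vsup v (G p₂) * vsup v (p₁ - p₂) := mul_comm _ _
  calc v (A + B + C) ≤ max (v (A + B)) (v C) := v.map_add _ _
    _ ≤ max (max (v A) (v B)) (v C) := max_le_max (v.map_add _ _) le_rfl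
    _ < lam * vsup v (G p₂) * vsup v (p₁ - p₂) := max_lt (max_lt hbA hbB) hbC
end

section
/- Let K be a valued field, B ⊆ K a ball, f : B → K, and suppose f satisfies |f(a) - f(b)| = μ·|a - b| for all a, b ∈ B with fixed μ ∈ Γ_K^× (f(B') is not assumed to be a ball). Let B' ⊆ B be a ball and B₁ the smallest ball of K containing f(B'). Then rad(B₁) = μ·rad(B'), where rad denotes the radius cut {|u - v| : u, v in the set}. -/
/-- A general ball in a valued field: an infinite proper subset closed under
`x, x' ∈ B`, `|x - y| ≤ |x - x'|` implies `y ∈ B`. -/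
def IsGBall {K Γ : Type*} [Field K] [LinearOrderedCommGroupWithZero Γ]
    (v : Valuation K Γ) (B : Set K) : Prop :=
  B.Infinite ∧ B ≠ Set.univ ∧ ∀ x ∈ B, ∀ x' ∈ B, ∀ y : K, v (x - y) ≤ v (x - x') → y ∈ B

/-- If `f` scales all distances on a ball `B` by `μ ≠ 0`, `B' ⊆ B` is a ball, and `B₁` is
the smallest ball containing `f(B')`, then the radius cut of `B₁` equals `μ·rad(B')`,
where `rad(S) = {|u - w| : u, w ∈ S}`. -/
theorem radius_cut_smallest_ball {K Γ : Type*} [Field K] [LinearOrderedCommGroupWithZero Γ]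
    (v : Valuation K Γ) (B B' B₁ : Set K) (hB : IsGBall v B) (hB' : IsGBall v B')
    (hB'B : B' ⊆ B) (f : K → K) (μ : Γ) (hμ : μ ≠ 0)
    (hf : ∀ x ∈ B, ∀ y ∈ B, v (f x - f y) = μ * v (x - y))
    (hB₁ : IsGBall v B₁) (hcont : f '' B' ⊆ B₁)
    (hmin : ∀ B₂ : Set K, IsGBall v B₂ → f '' B' ⊆ B₂ → B₁ ⊆ B₂) :
    {γ : Γ | ∃ u ∈ B₁, ∃ w ∈ B₁, γ = v (u - w)} =
      {γ : Γ | ∃ x ∈ B', ∃ y ∈ B', γ = μ * v (x - y)} := by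
  obtain ⟨hB'inf, hB'ne, hB'cl⟩ := hB'
  ext γ
  simp only [Set.mem_setOf_eq]
  constructor
  · rintro ⟨u, hu, w, hw, rfl⟩
    obtain ⟨x₀, hx₀⟩ := hB'inf.nonempty
    by_cases huw : u = w
    · exact ⟨x₀, hx₀, x₀, hx₀, by simp [huw]⟩
    have huw0 : v (u - w) ≠ 0 := by
      simp [sub_eq_zero, huw]
    have key : ∃ x ∈ B', ∃ y ∈ B', v (u - w) ≤ μ * v (x - y) := by
      by_contra h
      push_neg at h
      set B₂ : Set K := {z | v (f x₀ - z) < v (u - w)} with hB₂def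
      have hlt : ∀ a ∈ B₂, ∀ b ∈ B₂, v (a - b) < v (u - w) := by
        intro a ha b hb
        have h1 : v (a - b) ≤ max (v (a - f x₀)) (v (f x₀ - b)) := by
          have := v.map_add (a - f x₀) (f x₀ - b)
          simpa [sub_add_sub_cancel] using this
        refine lt_of_le_of_lt h1 (max_lt ?_ hb)
        rwa [v.map_sub_swap]
      have himg : f '' B' ⊆ B₂ := by
        rintro _ ⟨y, hy, rfl⟩
        have h2 := h x₀ hx₀ y hy
        rw [← hf x₀ (hB'B hx₀) y (hB'B hy)] at h2
        exact h2
      have hball : IsGBall v B₂ := by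
        refine ⟨(hB'inf.image ?_).mono himg, ?_, ?_⟩
        · intro a ha b hb hab
          have h3 := hf a (hB'B ha) b (hB'B hb)
          rw [hab, sub_self, v.map_zero] at h3
          rcases mul_eq_zero.mp h3.symm with h4 | h4
          · exact absurd h4 hμ
          · exact sub_eq_zero.mp ((map_eq_zero v).mp h4)
        · intro hEq
          have hu2 : u ∈ B₂ := hEq ▸ Set.mem_univ u
          have hw2 : w ∈ B₂ := hEq ▸ Set.mem_univ w
          exact lt_irrefl _ (hlt u hu2 w hw2)
        · intro x hx x' hx' y hxy
          have h5 : v (f x₀ - y) ≤ max (v (f x₀ - x)) (v (x - y)) := by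
            have := v.map_add (f x₀ - x) (x - y)
            simpa [sub_add_sub_cancel] using this
          refine lt_of_le_of_lt h5 (max_lt hx (lt_of_le_of_lt hxy ?_))
          have := hlt x hx x' hx'
          exact this
      have hsub := hmin B₂ hball himg
      exact lt_irrefl _ (hlt u (hsub hu) w (hsub hw))
    obtain ⟨x, hx, y, hy, hle⟩ := key
    have hxy0 : v (x - y) ≠ 0 := by
      intro h0
      rw [h0, mul_zero] at hle
      exact huw0 (le_zero_iff.mp hle)
    have hfxy0 : v (f x - f y) ≠ 0 := by
      rw [hf x (hB'B hx) y (hB'B hy)]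
      exact mul_ne_zero hμ hxy0
    have hfxy0' : f x - f y ≠ 0 := fun h => hfxy0 (by simp [h])
    set t : K := (u - w) * (x - y) / (f x - f y) with ht
    have hvt : v t = v (u - w) / μ := by
      rw [ht, map_div₀, v.map_mul, hf x (hB'B hx) y (hB'B hy)]
      rw [mul_comm μ (v (x - y)), mul_comm (v (x - y)) μ]
      exact mul_div_mul_right _ _ hxy0
    have hle' : v t ≤ v (x - y) := by
      rw [hvt, div_eq_mul_inv]
      calc v (u - w) * μ⁻¹ ≤ μ * v (x - y) * μ⁻¹ := mul_le_mul_left hle _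
        _ = v (x - y) := by rw [mul_comm μ (v (x - y)), mul_assoc, mul_inv_cancel₀ hμ, mul_one]
    have hy' : x - t ∈ B' := by
      apply hB'cl x hx y hy
      simpa using hle'
    refine ⟨x, hx, x - t, hy', ?_⟩
    rw [show x - (x - t) = t by ring, hvt, mul_div_cancel₀ _ hμ]
  · rintro ⟨x, hx, y, hy, rfl⟩
    exact ⟨f x, hcont ⟨x, hx, rfl⟩, f y, hcont ⟨y, hy, rfl⟩,
      (hf x (hB'B hx) y (hB'B hy)).symm⟩
end
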